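/- Let n ≥ 2 be an integer and let s ∈ [√n, n]. Then the minimum μ(s) of f(a) = a₁a₂⋯aₙ over Σ_s = {a ∈ [1/s, 1]ⁿ : ∑_{i=1}^{n} aᵢ = s} is given by μ(s) = (1/s + s - n + (⌊s(n-s)/(s-1)⌋ + 1)(1 - 1/s)) / s^{⌊s(n-s)/(s-1)⌋}. -/

import Mathlib

/-!
If two coordinates of a point of `Σ_s` lie strictly inside `[1/s, 1]`, moving them apart with
fixed sum until one reaches an endpoint does not increase the product, since
`x * y = ((x + y) ^ 2 - (x - y) ^ 2) / 4`. So the minimum is attained at a vertex: `j`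
coordinates `1/s`, one coordinate `c_j = s - n + 1 + j (1 - 1/s)` and the others `1`, with
product `c_j / s^j`. Writing `x = s(n - s)/(s - 1)`, one has `c_j = 1 - (x - j)(1 - 1/s)`, so
`c_j ∈ [1/s, 1]` forces `x - 1 ≤ j ≤ x`: either `j = ⌊x⌋`, or `x = j + 1` is an integer and
then `c_j = 1/s`, `c_{j+1} = 1` give the same product. Such a `j < n` exists because
`s ≥ √n` means `x ≤ n`.
-/

open Finset

variable {ι : Type*}

@[to_additive]
theorem Finset.prod_eq_mul_mul_prod_compl_pair {M : Type*} [CommMonoid M] [Fintype ι]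
    [DecidableEq ι] (f : ι → M) {i j : ι} (hij : i ≠ j) :
    ∏ x, f x = f i * f j * ∏ x ∈ {i, j}ᶜ, f x := by
  rw [← prod_mul_prod_compl {i, j} f, prod_pair hij]

@[to_additive]
theorem Finset.prod_eq_pow_mul_pow_of_forall_eq_or_eq {M : Type*} [CommMonoid M] [DecidableEq M]
    {S : Finset ι} {f : ι → M} {p q : M} (hf : ∀ x ∈ S, f x = p ∨ f x = q) :
    ∏ x ∈ S, f x = p ^ #{x ∈ S | f x = p} * q ^ #{x ∈ S | f x ≠ p} := by
  rw [← prod_filter_mul_prod_filter_not S (f · = p)]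
  congr 1
  · exact prod_eq_pow_card fun x hx => (mem_filter.1 hx).2
  · refine prod_eq_pow_card fun x hx => ?_
    obtain ⟨hxS, hxp⟩ := mem_filter.1 hx
    exact (hf x hxS).resolve_left hxp

section Smoothing

variable [Fintype ι] [DecidableEq ι] {l u : ℝ}

theorem exists_endpoint_add_eq_mul_le {x y : ℝ} (hx : x ∈ Set.Icc l u) (hy : y ∈ Set.Icc l u) :
    ∃ x' y', x' ∈ Set.Icc l u ∧ y' ∈ Set.Icc l u ∧ (x' = l ∨ x' = u) ∧ x' + y' = x + y ∧
      x' * y' ≤ x * y := by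
  obtain ⟨hlx, hxu⟩ := hx
  obtain ⟨hly, hyu⟩ := hy
  by_cases h : x + y ≤ l + u
  · refine ⟨l, x + y - l, ⟨le_rfl, hlx.trans hxu⟩, ⟨by linarith, by linarith⟩, .inl rfl,
      by ring, ?_⟩
    nlinarith [mul_nonneg (sub_nonneg.2 hlx) (sub_nonneg.2 hly)]
  · refine ⟨u, x + y - u, ⟨hlx.trans hxu, le_rfl⟩, ⟨by linarith, by linarith⟩, .inr rfl,
      by ring, ?_⟩
    nlinarith [mul_nonneg (sub_nonneg.2 hxu) (sub_nonneg.2 hyu)]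

theorem exists_card_interior_lt (hl : 0 ≤ l) (a : ι → ℝ) (ha : ∀ i, a i ∈ Set.Icc l u)
    (hcard : 1 < #{i | a i ≠ l ∧ a i ≠ u}) :
    ∃ b : ι → ℝ, (∀ i, b i ∈ Set.Icc l u) ∧ ∑ i, b i = ∑ i, a i ∧ ∏ i, b i ≤ ∏ i, a i ∧
      #{i | b i ≠ l ∧ b i ≠ u} < #{i | a i ≠ l ∧ a i ≠ u} := by
  obtain ⟨i, hi, j, hj, hij⟩ := one_lt_card.1 hcard
  obtain ⟨x', y', hx', hy', hend, hsum, hprod⟩ := exists_endpoint_add_eq_mul_le (ha i) (ha j)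
  set b := Function.update (Function.update a i x') j y'
  have hbi : b i = x' := by simp [b, hij]
  have hbj : b j = y' := by simp [b]
  have hb_of_ne : ∀ k, k ≠ i → k ≠ j → b k = a k := fun k hki hkj => by simp [b, hki, hkj]
  have hrest : ∀ k ∈ ({i, j} : Finset ι)ᶜ, b k = a k := fun k hk => by
    simp only [mem_compl, mem_insert, mem_singleton, not_or] at hk
    exact hb_of_ne k hk.1 hk.2
  refine ⟨b, fun k => ?_, ?_, ?_, ?_⟩
  · by_cases hki : k = i
    · exact hki ▸ hbi ▸ hx'
    by_cases hkj : k = j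
    · exact hkj ▸ hbj ▸ hy'
    · exact hb_of_ne k hki hkj ▸ ha k
  · rw [sum_eq_add_add_sum_compl_pair b hij, sum_eq_add_add_sum_compl_pair a hij, hbi, hbj,
      hsum, sum_congr rfl hrest]
  · rw [prod_eq_mul_mul_prod_compl_pair b hij, prod_eq_mul_mul_prod_compl_pair a hij, hbi, hbj,
      prod_congr rfl hrest]
    exact mul_le_mul_of_nonneg_right hprod (prod_nonneg fun k _ => hl.trans (ha k).1)
  · refine (card_le_card fun k hk => ?_).trans_lt (card_erase_lt_of_mem hi)
    simp only [mem_filter, mem_univ, true_and] at hk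
    have hki : k ≠ i := by rintro rfl; rw [hbi] at hk; exact hend.elim hk.1 hk.2
    refine mem_erase.2 ⟨hki, ?_⟩
    by_cases hkj : k = j
    · exact hkj ▸ hj
    · simpa [hb_of_ne k hki hkj] using hk

theorem exists_card_interior_le_one (hl : 0 ≤ l) (a : ι → ℝ) (ha : ∀ i, a i ∈ Set.Icc l u) :
    ∃ b : ι → ℝ, (∀ i, b i ∈ Set.Icc l u) ∧ ∑ i, b i = ∑ i, a i ∧ ∏ i, b i ≤ ∏ i, a i ∧
      #{i | b i ≠ l ∧ b i ≠ u} ≤ 1 := by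
  induction hm : #{i | a i ≠ l ∧ a i ≠ u} using Nat.strong_induction_on generalizing a with
  | _ m ih =>
  by_cases hm1 : m ≤ 1
  · exact ⟨a, ha, rfl, le_rfl, hm ▸ hm1⟩
  obtain ⟨a', ha', hsum, hprod, hlt⟩ := exists_card_interior_lt hl a ha (hm ▸ not_le.1 hm1)
  obtain ⟨b, hb, hbsum, hbprod, hbcard⟩ := ih _ (hm ▸ hlt) a' ha' rfl
  exact ⟨b, hb, hbsum.trans hsum, hbprod.trans hprod, hbcard⟩

theorem exists_forall_ne_eq_or_eq [Nonempty ι] (hl : 0 ≤ l) (a : ι → ℝ)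
    (ha : ∀ i, a i ∈ Set.Icc l u) :
    ∃ b : ι → ℝ, (∀ i, b i ∈ Set.Icc l u) ∧ ∑ i, b i = ∑ i, a i ∧ ∏ i, b i ≤ ∏ i, a i ∧
      ∃ i₀, ∀ i ≠ i₀, b i = l ∨ b i = u := by
  obtain ⟨b, hb, hbsum, hbprod, hbcard⟩ := exists_card_interior_le_one hl a ha
  refine ⟨b, hb, hbsum, hbprod, ?_⟩
  by_cases hint : ∃ i₀, b i₀ ≠ l ∧ b i₀ ≠ u
  · obtain ⟨i₀, hi₀⟩ := hint
    refine ⟨i₀, fun i hi => ?_⟩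
    by_contra! h
    exact hi (card_le_one.1 hbcard i (by simpa using h) i₀ (by simpa using hi₀))
  · push Not at hint
    exact ⟨Classical.arbitrary ι, fun i _ => (em (b i = l)).imp id (hint i)⟩

end Smoothing

section Vertex

variable (n : ℕ) (s : ℝ)

noncomputable def vertexCoord (j : ℕ) : ℝ := s - n + 1 + j * (1 - 1 / s)

noncomputable def vertexProd (j : ℕ) : ℝ := vertexCoord n s j / s ^ j

variable {n s}

theorem vertexCoord_eq (hs : 1 < s) (j : ℕ) :
    vertexCoord n s j = 1 - (s * (n - s) / (s - 1) - j) * (1 - 1 / s) := by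
  have hs0 : s ≠ 0 := by positivity
  have hs1 : s - 1 ≠ 0 := by linarith
  unfold vertexCoord
  field_simp
  ring

theorem vertexCoord_mem_Icc_iff (hs : 1 < s) (j : ℕ) :
    vertexCoord n s j ∈ Set.Icc (1 / s) 1 ↔
      s * (n - s) / (s - 1) - 1 ≤ j ∧ (j : ℝ) ≤ s * (n - s) / (s - 1) := by
  have hpos : 0 < 1 - 1 / s := by
    rw [sub_pos, div_lt_one (by linarith)]
    exact hs
  rw [vertexCoord_eq hs, Set.mem_Icc]
  constructor
  · rintro ⟨h1, h2⟩
    constructor <;> nlinarith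
  · rintro ⟨h1, h2⟩
    constructor <;> nlinarith

theorem vertexProd_succ (hs : s ≠ 0) {j : ℕ} (hj : vertexCoord n s j = 1 / s) :
    vertexProd n s (j + 1) = vertexProd n s j := by
  have hsucc : vertexCoord n s (j + 1) = 1 := by
    rw [vertexCoord, Nat.cast_succ]
    unfold vertexCoord at hj
    linarith
  rw [vertexProd, vertexProd, hsucc, hj, pow_succ]
  field_simp

theorem vertexProd_eq_floor (hs : 1 < s) {j : ℕ}
    (hj : vertexCoord n s j ∈ Set.Icc (1 / s) 1) :
    vertexProd n s j = vertexProd n s ⌊s * (n - s) / (s - 1)⌋₊ := by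
  obtain ⟨hlo, hhi⟩ := (vertexCoord_mem_Icc_iff hs j).1 hj
  set x := s * (n - s) / (s - 1)
  have hjk : j ≤ ⌊x⌋₊ := Nat.le_floor hhi
  have hkj : ⌊x⌋₊ ≤ j + 1 := Nat.floor_le_of_le (by push_cast; linarith)
  rcases (by omega : ⌊x⌋₊ = j ∨ ⌊x⌋₊ = j + 1) with hk | hk
  · rw [hk]
  · have hx : x = j + 1 := by
      have := Nat.floor_le ((Nat.cast_nonneg j).trans hhi)
      rw [hk] at this
      push_cast at this
      linarith
    rw [hk, vertexProd_succ (by positivity)]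
    rw [vertexCoord_eq hs]
    change 1 - (x - j) * _ = _
    rw [hx]
    ring

end Vertex

theorem exists_nat_lt_mem_Icc_sub_one {x : ℝ} {N : ℕ} (hx0 : 0 ≤ x) (hxN : x ≤ N) (hN : 0 < N) :
    ∃ j < N, (j : ℝ) ∈ Set.Icc (x - 1) x := by
  rcases lt_or_ge ⌊x⌋₊ N with hk | hk
  · exact ⟨⌊x⌋₊, hk, by linarith [Nat.lt_floor_add_one x], Nat.floor_le hx0⟩
  · refine ⟨N - 1, by omega, ?_, ?_⟩
    · rw [Nat.cast_sub hN, Nat.cast_one]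
      linarith
    · have : (N : ℝ) ≤ x := (Nat.cast_le.2 hk).trans (Nat.floor_le hx0)
      rw [Nat.cast_sub hN, Nat.cast_one]
      linarith

section Extremal

variable [Fintype ι] {s : ℝ}

theorem vertexProd_le_prod [Nonempty ι] (hs : 1 < s) (a : ι → ℝ)
    (ha : ∀ i, a i ∈ Set.Icc (1 / s) 1) (hsum : ∑ i, a i = s) :
    vertexProd (Fintype.card ι) s ⌊s * (Fintype.card ι - s) / (s - 1)⌋₊ ≤ ∏ i, a i := by
  classical
  obtain ⟨b, hb, hbsum, hbprod, i₀, hi₀⟩ :=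
    exists_forall_ne_eq_or_eq (by positivity : (0 : ℝ) ≤ 1 / s) a ha
  have hrest : ∀ i ∈ ({i₀}ᶜ : Finset ι), b i = 1 / s ∨ b i = 1 :=
    fun i hi => hi₀ i (by simpa using hi)
  set j := #{i ∈ {i₀}ᶜ | b i = 1 / s}
  set m := #{i ∈ {i₀}ᶜ | b i ≠ 1 / s}
  have hcard : ((Fintype.card ι : ℕ) : ℝ) = j + m + 1 := by
    have h : j + m = #({i₀}ᶜ : Finset ι) := card_filter_add_card_filter_not _
    rw [card_compl, card_singleton] at h
    have := Fintype.card_pos (α := ι)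
    exact_mod_cast (by omega : Fintype.card ι = j + m + 1)
  have hcoord : b i₀ = vertexCoord (Fintype.card ι) s j := by
    have h := Fintype.sum_eq_add_sum_compl i₀ b
    rw [sum_eq_nsmul_add_nsmul_of_forall_eq_or_eq hrest, hbsum, hsum] at h
    simp only [nsmul_eq_mul, mul_one] at h
    rw [vertexCoord, hcard]
    linarith
  have hprod : ∏ i, b i = vertexProd (Fintype.card ι) s j := by
    rw [Fintype.prod_eq_mul_prod_compl i₀, prod_eq_pow_mul_pow_of_forall_eq_or_eq hrest, one_pow,
      mul_one, hcoord, vertexProd, one_div_pow, mul_one_div]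
  calc vertexProd (Fintype.card ι) s ⌊s * (Fintype.card ι - s) / (s - 1)⌋₊
      = vertexProd (Fintype.card ι) s j := (vertexProd_eq_floor hs (hcoord ▸ hb i₀)).symm
    _ = ∏ i, b i := hprod.symm
    _ ≤ ∏ i, a i := hbprod

theorem exists_prod_eq_vertexProd (hs : 1 < s) (hsN : s ≤ Fintype.card ι)
    (hNs : Fintype.card ι ≤ s ^ 2) :
    ∃ a : ι → ℝ, (∀ i, a i ∈ Set.Icc (1 / s) 1) ∧ ∑ i, a i = s ∧
      ∏ i, a i = vertexProd (Fintype.card ι) s ⌊s * (Fintype.card ι - s) / (s - 1)⌋₊ := by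
  set N := Fintype.card ι
  have hs1 : 0 < s - 1 := by linarith
  have hN : 0 < N := by exact_mod_cast (by linarith : (0 : ℝ) < N)
  obtain ⟨j, hjN, hj⟩ := exists_nat_lt_mem_Icc_sub_one (x := s * (N - s) / (s - 1))
    (div_nonneg (by nlinarith) hs1.le) (by rw [div_le_iff₀ hs1]; nlinarith) hN
  have hc := (vertexCoord_mem_Icc_iff hs j).2 hj
  have h1s : 1 / s ≤ 1 := hc.1.trans hc.2
  let e : ι ≃ Fin j ⊕ Unit ⊕ Fin (N - 1 - j) := Fintype.equivOfCardEq (by simp; omega)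
  let f : Fin j ⊕ Unit ⊕ Fin (N - 1 - j) → ℝ :=
    Sum.elim (fun _ => 1 / s) (Sum.elim (fun _ => vertexCoord N s j) (fun _ => 1))
  refine ⟨f ∘ e, fun i => ?_, ?_, ?_⟩
  · change f (e i) ∈ _
    generalize e i = k
    rcases k with _ | _ | _
    exacts [⟨le_rfl, h1s⟩, hc, ⟨h1s, le_rfl⟩]
  · rw [Function.comp_def, e.sum_comp f]
    simp only [f, Fintype.sum_sum_type, Sum.elim_inl, Sum.elim_inr, sum_const, card_univ,
      Fintype.card_fin, Fintype.card_unit, nsmul_eq_mul, mul_one]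
    rw [vertexCoord, Nat.cast_sub (by omega), Nat.cast_sub (by omega)]
    push_cast
    ring
  · rw [Function.comp_def, e.prod_comp f, ← vertexProd_eq_floor hs hc]
    simp only [f, Fintype.prod_sum_type, Sum.elim_inl, Sum.elim_inr, prod_const, card_univ,
      Fintype.card_fin, Fintype.card_unit, one_pow, pow_one, mul_one]
    rw [vertexProd, one_div_pow, one_div_mul_eq_div]

end Extremal

/-- For `n ≥ 2` and `s ∈ [√n, n]`, the minimum `μ(s)` of `a₁⋯aₙ` over
`Σ_s = {a ∈ [1/s, 1]ⁿ : ∑ aᵢ = s}` equals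
`(1/s + s - n + (⌊s(n-s)/(s-1)⌋ + 1)(1 - 1/s)) / s^⌊s(n-s)/(s-1)⌋`. -/
theorem stmt_10 (n : ℕ) (hn : 2 ≤ n) (s : ℝ) (hs : s ∈ Set.Icc (Real.sqrt n) (n : ℝ)) :
    IsLeast
      {y : ℝ | ∃ a : Fin n → ℝ, (∀ i, a i ∈ Set.Icc (1 / s) 1) ∧ ∑ i, a i = s ∧ y = ∏ i, a i}
      ((1 / s + s - n + ((Nat.floor (s * (n - s) / (s - 1)) : ℝ) + 1) * (1 - 1 / s)) /
        s ^ Nat.floor (s * (n - s) / (s - 1))) := by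
  obtain ⟨hsqrt, hsn⟩ := hs
  have hs : 1 < s := by
    refine lt_of_lt_of_le ?_ hsqrt
    rw [Real.lt_sqrt zero_le_one, one_pow]
    exact_mod_cast hn
  have hns : (n : ℝ) ≤ s ^ 2 := (Real.sqrt_le_left (by positivity)).1 hsqrt
  have : Nonempty (Fin n) := ⟨⟨0, by omega⟩⟩
  have hvalue : (1 / s + s - n + ((⌊s * (n - s) / (s - 1)⌋₊ : ℝ) + 1) * (1 - 1 / s)) /
      s ^ ⌊s * (n - s) / (s - 1)⌋₊ = vertexProd n s ⌊s * (n - s) / (s - 1)⌋₊ := by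
    rw [vertexProd, vertexCoord]
    ring
  rw [hvalue]
  constructor
  · obtain ⟨a, ha, hsum, hprod⟩ := exists_prod_eq_vertexProd (ι := Fin n) hs (by simpa) (by simpa)
    exact ⟨a, ha, hsum, by simpa using hprod.symm⟩
  · rintro y ⟨a, ha, hsum, rfl⟩
    simpa using vertexProd_le_prod hs a ha hsum
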